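/- Let n ≥ 2 be an integer and let 1 ≤ p₁,…,pₙ, r ≤ ∞. If the multilinear spherical average T is of strong type at (p₁,…,pₙ;r), then for every k ∈ {1,…,n} one has Σ_{j=1, j≠k}^n 1/p_j + 2/p_k ≤ n − 1 + 2/r. -/

import Mathlib

/-!
Test the estimate on indicators of intervals at two scales: `f_k` is the indicator of an interval
of length `≈ δ²` at `-1`, and `f_j` (`j ≠ k`) that of an interval of length `≈ δ` at `0`. For
`0 ≤ x ≤ δ²` every point of the spherical cap `σ_k ≥ 1 - δ²` contributes fully to `T f (x)`, so
`T f ≥ σ(cap) ≳ δ^(n-1)` on an interval of length `δ²` and `‖T f‖_r ≳ δ^(n-1+2/r)`, while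
`∏ ‖f_j‖_{p_j} ≲ δ^(2/p_k + ∑_{j≠k} 1/p_j)`. Letting `δ → 0` compares the exponents.
-/

open MeasureTheory ENNReal

/-- The `L^p` "norm" (with respect to Lebesgue measure on `ℝ`) of an
`ℝ≥0∞`-valued function, with the convention for `p = ∞`. -/
noncomputable def lpNorm (p : ℝ≥0∞) (g : ℝ → ℝ≥0∞) : ℝ≥0∞ :=
  if p = ∞ then essSup g (volume : Measure ℝ)
  else (∫⁻ x, g x ^ p.toReal) ^ (1 / p.toReal)

/-- The normalized (total mass 1) surface measure on the unit sphere
`S^{n-1} ⊂ ℝ^n`, viewed as a measure on `ℝ^n` supported on the sphere. -/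
noncomputable def normSphere (n : ℕ) : Measure (EuclideanSpace ℝ (Fin n)) :=
  (Measure.map Subtype.val
      ((volume : Measure (EuclideanSpace ℝ (Fin n))).toSphere) Set.univ)⁻¹ •
    Measure.map Subtype.val ((volume : Measure (EuclideanSpace ℝ (Fin n))).toSphere)

/-- The multilinear spherical average
`T(f₁,…,fₙ)(x) = ∫_{S^{n-1}} ∏_{j=1}^n f_j(x - σ_j) dσ(σ)`. -/
noncomputable def sphAvg (n : ℕ) (f : Fin n → ℝ → ℝ) (x : ℝ) : ℝ≥0∞ :=
  ∫⁻ σ, ∏ j, ENNReal.ofReal (f j (x - σ j)) ∂(normSphere n)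

open Set Metric Filter Topology
open scoped Pointwise

theorem ENNReal.rpow_sum {ι : Type*} (s : Finset ι) {a : ℝ≥0∞} (ha₀ : a ≠ 0) (ha : a ≠ ∞)
    (e : ι → ℝ) : a ^ (∑ i ∈ s, e i) = ∏ i ∈ s, a ^ e i := by
  induction s using Finset.cons_induction with
  | empty => simp
  | cons i s hi ih => rw [Finset.sum_cons, Finset.prod_cons, ENNReal.rpow_add _ _ ha₀ ha, ih]

theorem ofReal_comp_indicator_one (s : Set ℝ) :
    (fun x => ENNReal.ofReal (s.indicator 1 x)) = s.indicator 1 := by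
  ext x
  by_cases hx : x ∈ s <;> simp [hx]

theorem lpNorm_indicator_one_le {p : ℝ≥0∞} (hp : p ≠ 0) {s : Set ℝ} (hs : MeasurableSet s) :
    lpNorm p (s.indicator 1) ≤ volume s ^ p⁻¹.toReal := by
  rcases eq_or_ne p ∞ with rfl | hp_top
  · simp only [_root_.lpNorm, if_true, inv_top, toReal_zero, rpow_zero]
    exact essSup_le_of_ae_le 1 (ae_of_all _ fun x => indicator_le_self' (fun _ _ => zero_le) x)
  · have hp_pos : 0 < p.toReal := toReal_pos hp hp_top
    have hpow : (fun x => s.indicator (1 : ℝ → ℝ≥0∞) x ^ p.toReal) = s.indicator 1 := by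
      ext x
      by_cases hx : x ∈ s <;> simp [hx, hp_pos]
    rw [_root_.lpNorm, if_neg hp_top, hpow, lintegral_indicator_one hs, toReal_inv, one_div]

theorem mul_rpow_le_lpNorm {r : ℝ≥0∞} (hr : r ≠ 0) {g : ℝ → ℝ≥0∞} {K : ℝ≥0∞} {s : Set ℝ}
    (hs : MeasurableSet s) (hs₀ : volume s ≠ 0) (hg : ∀ x ∈ s, K ≤ g x) :
    K * volume s ^ r⁻¹.toReal ≤ lpNorm r g := by
  rcases eq_or_ne r ∞ with rfl | hr_top
  · simp only [_root_.lpNorm, if_true, inv_top, toReal_zero, rpow_zero, mul_one]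
    by_contra! hlt
    exact hs₀ (measure_mono_null (fun x hx => not_lt.2 (hg x hx)) (ae_lt_of_essSup_lt hlt))
  · have hr_pos : 0 < r.toReal := toReal_pos hr hr_top
    have hint : K ^ r.toReal * volume s ≤ ∫⁻ x, g x ^ r.toReal :=
      calc K ^ r.toReal * volume s = ∫⁻ x in s, K ^ r.toReal := (setLIntegral_const _ _).symm
        _ ≤ ∫⁻ x in s, g x ^ r.toReal :=
          setLIntegral_mono' hs fun x hx => rpow_le_rpow (hg x hx) hr_pos.le
        _ ≤ ∫⁻ x, g x ^ r.toReal := setLIntegral_le_lintegral _ _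
    calc K * volume s ^ r⁻¹.toReal = (K ^ r.toReal * volume s) ^ (1 / r.toReal) := by
          rw [mul_rpow_of_nonneg _ _ (by positivity), ← rpow_mul, mul_one_div_cancel hr_pos.ne',
            rpow_one, toReal_inv, one_div]
      _ ≤ lpNorm r g := by
          rw [_root_.lpNorm, if_neg hr_top]
          gcongr

theorem le_of_forall_mul_rpow_le {c K : ℝ≥0∞} {A B : ℝ} (hc : c ≠ 0) (hK : K ≠ ∞)
    (h : ∀ δ ∈ Ioc (0 : ℝ) 1, c * ENNReal.ofReal δ ^ A ≤ K * ENNReal.ofReal δ ^ B) : B ≤ A := by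
  by_contra! hAB
  have hlim : Tendsto (fun δ : ℝ => K * ENNReal.ofReal δ ^ (B - A)) (𝓝[>] 0) (𝓝 0) := by
    have hpow : Tendsto (fun δ : ℝ => ENNReal.ofReal δ ^ (B - A)) (𝓝 0) (𝓝 0) := by
      have := ((continuous_rpow_const (y := B - A)).comp ENNReal.continuous_ofReal).tendsto 0
      rwa [Function.comp_apply, ENNReal.ofReal_zero, zero_rpow_of_pos (sub_pos.2 hAB)] at this
    simpa using ENNReal.Tendsto.const_mul (hpow.mono_left nhdsWithin_le_nhds) (Or.inr hK)
  have hev : ∀ᶠ δ in 𝓝[>] (0 : ℝ), c ≤ K * ENNReal.ofReal δ ^ (B - A) := by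
    filter_upwards [Ioc_mem_nhdsGT zero_lt_one] with δ hδ
    have hD₀ : 0 < ENNReal.ofReal δ := ENNReal.ofReal_pos.2 hδ.1
    rw [← ENNReal.mul_le_mul_iff_left (rpow_pos hD₀ ofReal_ne_top).ne'
      (rpow_ne_top_of_nonneg' hD₀ ofReal_ne_top), mul_assoc,
      ← rpow_add _ _ hD₀.ne' ofReal_ne_top, sub_add_cancel]
    exact h δ hδ
  exact hc (nonpos_iff_eq_zero.1 (ge_of_tendsto hlim hev))

theorem EuclideanSpace.sq_add_sq_le_norm_sq {ι : Type*} [Fintype ι] (x : EuclideanSpace ℝ ι)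
    {i j : ι} (hij : i ≠ j) : x i ^ 2 + x j ^ 2 ≤ ‖x‖ ^ 2 := by
  classical
  rw [EuclideanSpace.real_norm_sq_eq, ← Finset.sum_pair (f := fun i => x i ^ 2) hij]
  exact Finset.sum_le_sum_of_subset_of_nonneg (Finset.subset_univ _) fun _ _ _ => sq_nonneg _

section

variable {n : ℕ}

def sphCap (k : Fin n) (δ : ℝ) : Set (EuclideanSpace ℝ (Fin n)) :=
  {σ | 1 - δ ^ 2 ≤ σ k} ∩ sphere 0 1

theorem measurableSet_sphCap (k : Fin n) (δ : ℝ) : MeasurableSet (sphCap k δ) :=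
  (measurableSet_le measurable_const (EuclideanSpace.proj k).continuous.measurable).inter
    isClosed_sphere.measurableSet

theorem normSphere_eq_of_subset_sphere {A : Set (EuclideanSpace ℝ (Fin n))}
    (hA : MeasurableSet A) (hA_sub : A ⊆ sphere 0 1) :
    normSphere n A = ((volume : Measure (EuclideanSpace ℝ (Fin n))).toSphere univ)⁻¹ *
      (n * volume (Ioo (0 : ℝ) 1 • A)) := by
  rw [normSphere, Measure.smul_apply, smul_eq_mul, Measure.map_apply measurable_subtype_coe hA,
    Measure.map_apply measurable_subtype_coe .univ, preimage_univ,
    Measure.toSphere_apply' _ (measurable_subtype_coe hA), Subtype.image_preimage_coe,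
    inter_eq_right.2 hA_sub, finrank_euclideanSpace_fin]

theorem sq_le_of_mem_sphCap {k j : Fin n} {δ : ℝ} {σ : EuclideanSpace ℝ (Fin n)}
    (hσ : σ ∈ sphCap k δ) (hjk : j ≠ k) : σ j ^ 2 ≤ 2 * δ ^ 2 := by
  have hnorm : ‖σ‖ = 1 := mem_sphere_zero_iff_norm.1 hσ.2
  have hsq := EuclideanSpace.sq_add_sq_le_norm_sq σ hjk
  have hk : 1 - δ ^ 2 ≤ σ k := hσ.1
  rw [hnorm] at hsq
  nlinarith

theorem le_one_of_mem_sphCap {k : Fin n} {δ : ℝ} {σ : EuclideanSpace ℝ (Fin n)}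
    (hσ : σ ∈ sphCap k δ) : σ k ≤ 1 := by
  have h := PiLp.norm_apply_le σ k
  rw [mem_sphere_zero_iff_norm.1 hσ.2, Real.norm_eq_abs] at h
  exact (le_abs_self _).trans h

/- `toSphere` measures a subset of the sphere by the volume of the cone `Ioo 0 1 • A` over it;
this box of volume `≈ δ^(n-1)` lies in the cone over `sphCap k δ`. -/
def coneBox (k : Fin n) (δ : ℝ) : Set (EuclideanSpace ℝ (Fin n)) :=
  WithLp.ofLp ⁻¹' univ.pi fun j => if j = k then Ioo (1 / 2) (3 / 4) else Ioo 0 (δ / (2 * n))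

theorem coneBox_subset_Ioo_smul_sphCap {k : Fin n} {δ : ℝ} (hδ : δ ∈ Ioc 0 1) :
    coneBox k δ ⊆ Ioo (0 : ℝ) 1 • sphCap k δ := by
  intro x hx
  have hxk : x k ∈ Ioo (1 / 2 : ℝ) (3 / 4) := by simpa using hx k (mem_univ k)
  have hxj : ∀ j ∈ Finset.univ.erase k, x j ^ 2 ≤ (δ / (2 * n)) ^ 2 := fun j hj => by
    have hmem := hx j (mem_univ j)
    simp only [if_neg (Finset.ne_of_mem_erase hj)] at hmem
    exact pow_le_pow_left₀ hmem.1.le hmem.2.le 2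
  have hn : (1 : ℝ) ≤ n := by exact_mod_cast k.pos
  have hrest : ∑ j ∈ Finset.univ.erase k, x j ^ 2 ≤ δ ^ 2 / 4 :=
    calc ∑ j ∈ Finset.univ.erase k, x j ^ 2
        ≤ (Finset.univ.erase k).card * (δ / (2 * n)) ^ 2 := by
          simpa using Finset.sum_le_card_nsmul _ _ _ hxj
      _ ≤ n * (δ / (2 * n)) ^ 2 := by
          gcongr
          exact_mod_cast (Finset.card_erase_le).trans (Finset.card_fin n).le
      _ = δ ^ 2 / (4 * n) := by field_simp; ring
      _ ≤ δ ^ 2 / 4 := by gcongr; linarith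
  have hnorm_sq : ‖x‖ ^ 2 ≤ x k ^ 2 + δ ^ 2 / 4 := by
    rw [EuclideanSpace.real_norm_sq_eq, ← Finset.add_sum_erase _ _ (Finset.mem_univ k)]
    linarith
  have hnorm_pos : 0 < ‖x‖ :=
    lt_of_lt_of_le (by linarith [hxk.1]) ((le_abs_self _).trans (PiLp.norm_apply_le x k))
  have hδ_sq : δ ^ 2 ≤ 1 := pow_le_one₀ hδ.1.le hδ.2
  have hxk_sq : 1 / 4 < x k ^ 2 ∧ x k ^ 2 < 9 / 16 := by
    constructor <;> nlinarith [hxk.1, hxk.2]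
  have hnorm_lt : ‖x‖ < 1 := (sq_lt_one_iff₀ (norm_nonneg x)).1 (by linarith)
  have hcap : (1 - δ ^ 2) * ‖x‖ ≤ x k := by
    refine le_of_pow_le_pow_left₀ two_ne_zero (by linarith [hxk.1]) ?_
    calc ((1 - δ ^ 2) * ‖x‖) ^ 2 ≤ (1 - δ ^ 2) ^ 2 * (x k ^ 2 + δ ^ 2 / 4) := by
          rw [mul_pow]; gcongr
      _ ≤ x k ^ 2 := by nlinarith [sq_nonneg δ, mul_nonneg (sq_nonneg δ) (sub_nonneg.2 hδ_sq)]
  refine ⟨‖x‖, ⟨hnorm_pos, hnorm_lt⟩, ‖x‖⁻¹ • x, ⟨?_, ?_⟩, smul_inv_smul₀ hnorm_pos.ne' x⟩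
  · change 1 - δ ^ 2 ≤ ‖x‖⁻¹ * x k
    rw [le_inv_mul_iff₀ hnorm_pos]
    linarith
  · simp [norm_smul, hnorm_pos.ne']

theorem volume_coneBox (k : Fin n) (δ : ℝ) :
    volume (coneBox k δ) = 4⁻¹ * ENNReal.ofReal (δ / (2 * n)) ^ (n - 1) := by
  have hmeas : MeasurableSet (univ.pi fun j : Fin n =>
      if j = k then Ioo (1 / 2 : ℝ) (3 / 4) else Ioo 0 (δ / (2 * n))) :=
    .univ_pi fun j => by split_ifs <;> exact measurableSet_Ioo
  rw [coneBox, (PiLp.volume_preserving_ofLp (Fin n)).measure_preimage hmeas.nullMeasurableSet,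
    volume_pi_pi, ← Finset.mul_prod_erase _ _ (Finset.mem_univ k),
    Finset.prod_congr rfl fun j hj => by rw [if_neg (Finset.ne_of_mem_erase hj)]]
  simp only [if_pos, Real.volume_Ioo, sub_zero, Finset.prod_const,
    Finset.card_erase_of_mem (Finset.mem_univ k), Finset.card_univ, Fintype.card_fin]
  rw [show (3 / 4 - 1 / 2 : ℝ) = 4⁻¹ by norm_num, ENNReal.ofReal_inv_of_pos (by norm_num),
    ENNReal.ofReal_ofNat]

theorem exists_mul_pow_le_normSphere_sphCap (k : Fin n) :
    ∃ c ≠ 0, ∀ δ ∈ Ioc (0 : ℝ) 1, c * ENNReal.ofReal δ ^ (n - 1) ≤ normSphere n (sphCap k δ) := by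
  set M := (volume : Measure (EuclideanSpace ℝ (Fin n))).toSphere univ
  refine ⟨M⁻¹ * (4⁻¹ * ENNReal.ofReal (1 / (2 * n)) ^ (n - 1)), ?_, ?_⟩
  · have hn : (0 : ℝ) < n := by exact_mod_cast k.pos
    exact mul_ne_zero (ENNReal.inv_ne_zero.2 (measure_ne_top _ _))
      (mul_ne_zero (by norm_num) (pow_ne_zero _ (ENNReal.ofReal_pos.2 (by positivity)).ne'))
  intro δ hδ
  rw [normSphere_eq_of_subset_sphere (measurableSet_sphCap k δ) inter_subset_right]
  calc M⁻¹ * (4⁻¹ * ENNReal.ofReal (1 / (2 * n)) ^ (n - 1)) * ENNReal.ofReal δ ^ (n - 1)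
      = M⁻¹ * volume (coneBox k δ) := by
        rw [volume_coneBox, div_eq_mul_one_div δ, ENNReal.ofReal_mul hδ.1.le, mul_pow]
        ring
    _ ≤ M⁻¹ * (n * volume (Ioo (0 : ℝ) 1 • sphCap k δ)) := by
        gcongr
        exact (measure_mono (coneBox_subset_Ioo_smul_sphCap hδ)).trans
          (le_mul_of_one_le_left zero_le (by exact_mod_cast k.pos))

def scaleExponent (k j : Fin n) : ℕ := if j = k then 2 else 1

def testSet (k : Fin n) (δ : ℝ) (j : Fin n) : Set ℝ :=
  closedBall (if j = k then -1 else 0) (3 * δ ^ scaleExponent k j)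

theorem sub_mem_testSet {k : Fin n} {δ x : ℝ} (hδ : δ ∈ Ioc 0 1) {σ : EuclideanSpace ℝ (Fin n)}
    (hσ : σ ∈ sphCap k δ) (hx : x ∈ Icc 0 (δ ^ 2)) (j : Fin n) : x - σ j ∈ testSet k δ j := by
  have hδ_sq : δ ^ 2 ≤ δ := by nlinarith [hδ.1, hδ.2]
  rw [testSet, scaleExponent, mem_closedBall, Real.dist_eq, abs_le]
  split_ifs with hjk
  · subst hjk
    have hσ_le := le_one_of_mem_sphCap hσ
    have hσ_ge : 1 - δ ^ 2 ≤ σ j := hσ.1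
    constructor <;> linarith [hx.1, hx.2]
  · have hσj := abs_le_of_sq_le_sq' (a := σ j) (b := 2 * δ)
      (by nlinarith [sq_le_of_mem_sphCap hσ hjk]) (by linarith [hδ.1])
    constructor <;> linarith [hx.1, hx.2]

theorem normSphere_sphCap_le_sphAvg {k : Fin n} {δ x : ℝ} (hδ : δ ∈ Ioc 0 1)
    (hx : x ∈ Icc 0 (δ ^ 2)) :
    normSphere n (sphCap k δ) ≤ sphAvg n (fun j => (testSet k δ j).indicator 1) x := by
  rw [← lintegral_indicator_one (measurableSet_sphCap k δ)]
  refine lintegral_mono (indicator_le fun σ hσ => ?_)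
  simp [indicator_of_mem (sub_mem_testSet hδ hσ hx _)]

theorem exists_mul_rpow_le_lpNorm_sphAvg (k : Fin n) {r : ℝ≥0∞} (hr : r ≠ 0) :
    ∃ c ≠ 0, ∀ δ ∈ Ioc (0 : ℝ) 1, c * ENNReal.ofReal δ ^ ((n - 1 : ℕ) + 2 * r⁻¹.toReal) ≤
      lpNorm r (sphAvg n fun j => (testSet k δ j).indicator 1) := by
  obtain ⟨c, hc, hcap⟩ := exists_mul_pow_le_normSphere_sphCap k
  refine ⟨c, hc, fun δ hδ => ?_⟩
  have hD : ENNReal.ofReal δ ≠ 0 := (ENNReal.ofReal_pos.2 hδ.1).ne'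
  calc c * ENNReal.ofReal δ ^ ((n - 1 : ℕ) + 2 * r⁻¹.toReal)
      = c * ENNReal.ofReal δ ^ (n - 1) * volume (Icc 0 (δ ^ 2)) ^ r⁻¹.toReal := by
        rw [Real.volume_Icc, sub_zero, ENNReal.ofReal_pow hδ.1.le, rpow_add _ _ hD ofReal_ne_top,
          rpow_natCast, ← rpow_natCast _ 2, ← rpow_mul, mul_assoc, Nat.cast_ofNat]
    _ ≤ normSphere n (sphCap k δ) * volume (Icc 0 (δ ^ 2)) ^ r⁻¹.toReal := by
        gcongr
        exact hcap δ hδ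
    _ ≤ lpNorm r (sphAvg n fun j => (testSet k δ j).indicator 1) :=
        mul_rpow_le_lpNorm hr measurableSet_Icc (by simpa using hδ.1.ne')
          fun x hx => normSphere_sphCap_le_sphAvg hδ hx

theorem exists_prod_lpNorm_testSet_le {p : Fin n → ℝ≥0∞} (hp : ∀ j, p j ≠ 0) (k : Fin n) :
    ∃ K ≠ ∞, ∀ δ > 0,
      ∏ j, lpNorm (p j) (fun x => ENNReal.ofReal ((testSet k δ j).indicator 1 x)) ≤
        K * ENNReal.ofReal δ ^ ∑ j, (scaleExponent k j : ℝ) * (p j)⁻¹.toReal := by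
  refine ⟨∏ j, ENNReal.ofReal 6 ^ (p j)⁻¹.toReal,
    ENNReal.prod_ne_top fun j _ => rpow_ne_top_of_nonneg toReal_nonneg ofReal_ne_top,
    fun δ hδ => ?_⟩
  calc ∏ j, lpNorm (p j) (fun x => ENNReal.ofReal ((testSet k δ j).indicator 1 x))
      ≤ ∏ j, volume (testSet k δ j) ^ (p j)⁻¹.toReal := Finset.prod_le_prod' fun j _ => by
        rw [ofReal_comp_indicator_one]
        exact lpNorm_indicator_one_le (hp j) measurableSet_closedBall
    _ = ∏ j, ENNReal.ofReal 6 ^ (p j)⁻¹.toReal *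
          ENNReal.ofReal δ ^ ((scaleExponent k j : ℝ) * (p j)⁻¹.toReal) :=
        Finset.prod_congr rfl fun j _ => by
          rw [testSet, Real.volume_closedBall, ← mul_assoc, ENNReal.ofReal_mul (by norm_num),
            ENNReal.ofReal_pow hδ.le, mul_rpow_of_nonneg _ _ toReal_nonneg, ← rpow_natCast,
            ← rpow_mul]
          norm_num
    _ = _ := by
        rw [Finset.prod_mul_distrib, ENNReal.rpow_sum _ (ENNReal.ofReal_pos.2 hδ).ne' ofReal_ne_top]

end

theorem necessary_condition_ii (n : ℕ) (p : Fin n → ℝ≥0∞) (r : ℝ≥0∞)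
    (hp : ∀ j, 1 ≤ p j) (hr : 1 ≤ r)
    (hT : ∃ C : ℝ, 0 < C ∧ ∀ f : Fin n → ℝ → ℝ,
      (∀ j, Measurable (f j)) → (∀ j x, 0 ≤ f j x) →
      lpNorm r (sphAvg n f) ≤ ENNReal.ofReal C *
        ∏ j, lpNorm (p j) (fun x => ENNReal.ofReal (f j x))) :
    ∀ k : Fin n, (∑ j ∈ Finset.univ.erase k, 1 / p j) + 2 / p k ≤
      ((n - 1 : ℕ) : ℝ≥0∞) + 2 / r := by
  intro k
  obtain ⟨C, -, hC⟩ := hT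
  have hp₀ : ∀ j, p j ≠ 0 := fun j => (zero_lt_one.trans_le (hp j)).ne'
  have hr₀ : r ≠ 0 := (zero_lt_one.trans_le hr).ne'
  obtain ⟨c, hc, hlower⟩ := exists_mul_rpow_le_lpNorm_sphAvg k hr₀
  obtain ⟨K, hK, hupper⟩ := exists_prod_lpNorm_testSet_le hp₀ k
  have hexp := le_of_forall_mul_rpow_le hc (mul_ne_top ofReal_ne_top hK) fun δ hδ =>
    (hlower δ hδ).trans <| (hC _ (fun _ => measurable_const.indicator measurableSet_closedBall)
      fun _ _ => indicator_nonneg (fun _ _ => zero_le_one) _).trans <| by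
        rw [mul_assoc]
        exact mul_le_mul_right (hupper δ hδ.1) _
  rw [← Finset.add_sum_erase _ _ (Finset.mem_univ k), scaleExponent, if_pos rfl,
    Finset.sum_congr rfl fun j hj => by rw [scaleExponent, if_neg (Finset.ne_of_mem_erase hj)]]
    at hexp
  rw [← toReal_le_toReal (by simp [div_eq_top, hp₀]) (by simp [div_eq_top, hr₀]),
    toReal_add (by simp [hp₀]) (by simp [div_eq_top, hp₀]),
    toReal_add (by simp) (by simp [div_eq_top, hr₀]), toReal_sum (by simp [hp₀])]
  simp only [div_eq_mul_inv, one_mul, toReal_mul, toReal_ofNat, toReal_natCast]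
  simp only [Nat.cast_ofNat, Nat.cast_one, one_mul] at hexp
  linarith
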